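/- Under hypotheses (H), there exists a C² function ζ₂ on [0,∞) solving the homogeneous equation (12) on (0,∞), with ζ₂(0) = 0, ζ₂′(0) = 1, and ζ₂(r)/r → 1 as r → 0⁺; moreover ζ₂(r) > 0 for all sufficiently small r > 0. -/

import Mathlib

/-!
Writing `ζ r = r * v r`, equation (12) becomes `(Q v')' = Q K v` with the integrating factor
`Q r = r ^ 2 * exp (∫₁^r (A t / t - γ t))`, where `A = (d - 1) / (1 + η ^ 2) ≥ 0`, `γ = β g` and
`K r = γ r / r = 2 β b r / σ r ^ 2` is continuous up to `0`. Because `A ≥ 0`,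
`Q t ≤ Q s * exp (∫ |γ|)` for `t ≤ s`, so with `v 0 = 1` the problem becomes the Volterra equation
`v x = 1 + ∫₀^x Q(s)⁻¹ ∫₀^s Q K v` with a bounded kernel, despite the singularity at `r = 0`.
It is a contraction for a Bielecki norm `sup e^{-Λ t} |v t|` on every `[0, T]`, and the solutions
on the intervals `[0, T]` glue together. Then `ζ = r v` is `C²` up to `0` with `ζ' 0 = v 0 = 1`.
-/

open Filter MeasureTheory Set Topology

section CausalFixedPoint

variable {P : (ℝ → ℝ) → ℝ → ℝ}

def IsCausal (P : (ℝ → ℝ) → ℝ → ℝ) : Prop :=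
  ∀ v₁ v₂ : ℝ → ℝ, ∀ x, 0 ≤ x → EqOn v₁ v₂ (Icc 0 x) → P v₁ x = P v₂ x

/-- `P` halves the weighted distance `sup_{t ∈ [0, T]} e^{-Λ t} |v₁ t - v₂ t|`. -/
def HalvesBieleckiDist (P : (ℝ → ℝ) → ℝ → ℝ) (T Λ : ℝ) : Prop :=
  ∀ v₁ v₂ : ℝ → ℝ, Continuous v₁ → Continuous v₂ → ∀ D : ℝ,
    (∀ t ∈ Icc 0 T, |v₁ t - v₂ t| ≤ D * Real.exp (Λ * t)) →
    ∀ x ∈ Icc 0 T, |P v₁ x - P v₂ x| ≤ D / 2 * Real.exp (Λ * x)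

lemma exists_unique_fixedPoint_on_Icc {T Λ : ℝ} (hT : 0 < T) (hP : IsCausal P)
    (hcont : ∀ v, Continuous v → ContinuousOn (P v) (Icc 0 T)) (hcontr : HalvesBieleckiDist P T Λ) :
    ∃ v, Continuous v ∧ (∀ x ∈ Icc 0 T, v x = P v x) ∧
      ∀ u, Continuous u → (∀ x ∈ Icc 0 T, u x = P u x) → EqOn u v (Icc 0 T) := by
  have hexp_cancel (x y : ℝ) : Real.exp (Λ * x) * (Real.exp (-(Λ * x)) * y) = y := by
    rw [← mul_assoc, ← Real.exp_add, add_neg_cancel, Real.exp_zero, one_mul]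
  -- `Φ` is the fixed-point map for the weighted unknown `w = e^{-Λ t} v`.
  let lift (w : C(Icc (0:ℝ) T, ℝ)) (t : ℝ) : ℝ := Real.exp (Λ * t) * IccExtend hT.le w t
  have hlift_cont (w : C(Icc (0:ℝ) T, ℝ)) : Continuous (lift w) := by
    have := w.continuous.comp (continuous_projIcc (h := hT.le))
    fun_prop
  have hlift_apply (w : C(Icc (0:ℝ) T, ℝ)) (x : Icc (0:ℝ) T) :
      lift w x = Real.exp (Λ * x) * w x := by
    simp only [lift, IccExtend_val]
  let Φ (w : C(Icc (0:ℝ) T, ℝ)) : C(Icc (0:ℝ) T, ℝ) :=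
    ⟨fun x => Real.exp (-(Λ * x)) * P (lift w) x,
      ((by fun_prop : Continuous fun x => Real.exp (-(Λ * x))).continuousOn.mul
        (hcont _ (hlift_cont w))).domRestrict⟩
  have hΦ : ContractingWith (1 / 2) Φ := by
    refine ⟨by rw [← NNReal.coe_lt_coe]; norm_num, .of_dist_le_mul fun w₁ w₂ => ?_⟩
    rw [ContinuousMap.dist_le (by positivity)]
    intro x
    have hdiff : ∀ t ∈ Icc 0 T, |lift w₁ t - lift w₂ t| ≤ dist w₁ w₂ * Real.exp (Λ * t) := by
      intro t ht
      rw [hlift_apply w₁ ⟨t, ht⟩, hlift_apply w₂ ⟨t, ht⟩, ← mul_sub, abs_mul,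
        abs_of_pos (Real.exp_pos _), mul_comm, ← Real.dist_eq]
      gcongr
      exact ContinuousMap.dist_apply_le_dist _
    calc dist (Φ w₁ x) (Φ w₂ x) = Real.exp (-(Λ * x)) * |P (lift w₁) x - P (lift w₂) x| := by
          change |Real.exp _ * _ - Real.exp _ * _| = _
          rw [← mul_sub, abs_mul, abs_of_pos (Real.exp_pos _)]
      _ ≤ Real.exp (-(Λ * x)) * (dist w₁ w₂ / 2 * Real.exp (Λ * x)) := by
          gcongr
          exact hcontr _ _ (hlift_cont w₁) (hlift_cont w₂) _ hdiff x x.2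
      _ = ↑(1 / 2 : NNReal) * dist w₁ w₂ := by
          rw [mul_left_comm, ← Real.exp_add, neg_add_cancel, Real.exp_zero]; push_cast; ring
  refine ⟨lift (hΦ.fixedPoint Φ), hlift_cont _, fun x hx => ?_, fun u hu hsol x hx => ?_⟩
  · conv_lhs => rw [hlift_apply _ ⟨x, hx⟩, ← hΦ.fixedPoint_isFixedPt]
    exact hexp_cancel _ _
  · let wu : C(Icc (0:ℝ) T, ℝ) := ⟨fun t => Real.exp (-(Λ * t)) * u t, by fun_prop⟩
    have hlift_wu : EqOn (lift wu) u (Icc 0 T) := fun t ht => by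
      rw [hlift_apply wu ⟨t, ht⟩]
      exact hexp_cancel _ _
    have hwu : Φ wu = wu := by
      ext ⟨t, ht⟩
      change Real.exp _ * P (lift wu) t = Real.exp _ * u t
      rw [hP _ u t ht.1 (hlift_wu.mono (Icc_subset_Icc_right ht.2)), ← hsol t ht]
    rw [← hlift_wu hx, ← hΦ.fixedPoint_unique hwu]

lemma exists_fixedPoint_on_Ici (hP : IsCausal P)
    (hcont : ∀ v, Continuous v → ContinuousOn (P v) (Ici 0))
    (hcontr : ∀ T > 0, ∃ Λ, HalvesBieleckiDist P T Λ) :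
    ∃ v, ContinuousOn v (Ici 0) ∧ ∀ x, 0 ≤ x → v x = P v x := by
  have hsol (T : ℝ) (hT : 0 < T) : ∃ v, Continuous v ∧ (∀ x ∈ Icc 0 T, v x = P v x) ∧
      ∀ u, Continuous u → (∀ x ∈ Icc 0 T, u x = P u x) → EqOn u v (Icc 0 T) := by
    obtain ⟨Λ, hΛ⟩ := hcontr T hT
    exact exists_unique_fixedPoint_on_Icc hT hP
      (fun v hv => (hcont v hv).mono Icc_subset_Ici_self) hΛ
  choose w hw_cont hw_fix using fun n : ℕ => hsol (n + 1) n.cast_add_one_pos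
  have hagree (m n : ℕ) : EqOn (w m) (w n) (Icc 0 (min (m + 1 : ℝ) (n + 1))) := by
    obtain ⟨u, -, -, huniq⟩ := hsol _ (lt_min m.cast_add_one_pos n.cast_add_one_pos)
    have hm := huniq (w m) (hw_cont m) fun x hx =>
      (hw_fix m).1 x ⟨hx.1, hx.2.trans (min_le_left _ _)⟩
    have hn := huniq (w n) (hw_cont n) fun x hx =>
      (hw_fix n).1 x ⟨hx.1, hx.2.trans (min_le_right _ _)⟩
    exact fun x hx => (hm hx).trans (hn hx).symm
  let v (x : ℝ) : ℝ := w ⌈x⌉₊ x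
  have hv (n : ℕ) : EqOn v (w n) (Icc 0 (n + 1)) := fun x hx =>
    hagree _ _ ⟨hx.1, le_min ((Nat.le_ceil x).trans (lt_add_one _).le) hx.2⟩
  have hx_lt (x : ℝ) : x < ⌈x⌉₊ + 1 := (Nat.le_ceil x).trans_lt (lt_add_one _)
  refine ⟨v, fun x hx => ?_, fun x hx => ?_⟩
  · have hnhds : Iio (⌈x⌉₊ + 1 : ℝ) ∈ 𝓝[Ici 0] x :=
      mem_nhdsWithin_of_mem_nhds (Iio_mem_nhds (hx_lt x))
    refine (hw_cont ⌈x⌉₊).continuousWithinAt.congr_of_eventuallyEq ?_ (hv _ ⟨hx, (hx_lt x).le⟩)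
    filter_upwards [self_mem_nhdsWithin, hnhds] with y hy₀ hy using hv _ ⟨hy₀, hy.le⟩
  · rw [hP v _ x hx ((hv _).mono (Icc_subset_Icc_right (hx_lt x).le))]
    exact (hw_fix _).1 x ⟨hx, (hx_lt x).le⟩

end CausalFixedPoint

section HalfLine

variable {F F' F'' : ℝ → ℝ} {a : ℝ}

lemma intervalIntegrable_of_continuousOn_Ici (hF : ContinuousOn F (Ici a)) {x y : ℝ}
    (hx : a ≤ x) (hy : a ≤ y) : IntervalIntegrable F volume x y :=
  (hF.mono fun _ ht => (le_min hx hy).trans ht.1).intervalIntegrable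

lemma hasDerivAt_primitive_of_continuousOn_Ici (hF : ContinuousOn F (Ici a)) {x : ℝ}
    (hx : a < x) : HasDerivAt (fun u => ∫ t in a..u, F t) (F x) x :=
  intervalIntegral.integral_hasDerivAt_right
    (intervalIntegrable_of_continuousOn_Ici hF le_rfl hx.le)
    ((hF.mono Ioi_subset_Ici_self).stronglyMeasurableAtFilter isOpen_Ioi x hx)
    (hF.continuousAt (Ici_mem_nhds hx))

lemma continuousOn_primitive_Ici (hF : ContinuousOn F (Ici a)) :
    ContinuousOn (fun u => ∫ t in a..u, F t) (Ici a) := by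
  intro x hx
  have hI : uIcc a (x + 1) = Icc a (x + 1) := uIcc_of_le (by linarith [mem_Ici.1 hx])
  have hint : IntegrableOn F (uIcc a (x + 1)) :=
    (hF.mono (hI ▸ Icc_subset_Ici_self)).integrableOn_compact isCompact_uIcc
  refine (intervalIntegral.continuousOn_primitive_interval hint x
    (hI ▸ ⟨hx, by linarith⟩)).mono_of_mem_nhdsWithin ?_
  rw [hI]
  exact inter_mem self_mem_nhdsWithin (mem_nhdsWithin_of_mem_nhds (Iic_mem_nhds (by linarith)))

lemma hasDerivWithinAt_Ici_of_hasDerivAt_Ioi (hF : ContinuousOn F (Ici a))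
    (hF' : ContinuousOn F' (Ici a)) (hderiv : ∀ x, a < x → HasDerivAt F (F' x) x) {x : ℝ}
    (hx : a ≤ x) : HasDerivWithinAt F (F' x) (Ici a) x := by
  rcases hx.eq_or_lt with rfl | hx
  · refine hasDerivWithinAt_Ici_of_tendsto_deriv (s := Ioi a)
      (fun y hy => (hderiv y hy).differentiableAt.differentiableWithinAt)
      ((hF a self_mem_Ici).mono Ioi_subset_Ici_self) self_mem_nhdsWithin ?_
    refine ((hF' a self_mem_Ici).mono Ioi_subset_Ici_self).tendsto.congr' ?_
    filter_upwards [self_mem_nhdsWithin] with y hy using (hderiv y hy).deriv.symm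
  · exact (hderiv x hx).hasDerivWithinAt

lemma contDiffOn_two_Ici_of_hasDerivAt_Ioi (hF : ContinuousOn F (Ici a))
    (hF' : ContinuousOn F' (Ici a)) (hF'' : ContinuousOn F'' (Ici a))
    (hderiv : ∀ x, a < x → HasDerivAt F (F' x) x)
    (hderiv' : ∀ x, a < x → HasDerivAt F' (F'' x) x) :
    ContDiffOn ℝ 2 F (Ici a) := by
  have h1 (x : ℝ) (hx : x ∈ Ici a) := hasDerivWithinAt_Ici_of_hasDerivAt_Ioi hF hF' hderiv hx
  have h2 (x : ℝ) (hx : x ∈ Ici a) := hasDerivWithinAt_Ici_of_hasDerivAt_Ioi hF' hF'' hderiv' hx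
  have hu := uniqueDiffOn_Ici a
  rw [show (2 : WithTop ℕ∞) = 1 + 1 from rfl, contDiffOn_succ_iff_derivWithin hu]
  refine ⟨fun x hx => (h1 x hx).differentiableWithinAt, by simp, ?_⟩
  refine ContDiffOn.congr ?_ fun x hx => (h1 x hx).derivWithin (hu x hx)
  rw [show (1 : WithTop ℕ∞) = 0 + 1 from rfl, contDiffOn_succ_iff_derivWithin hu]
  refine ⟨fun x hx => (h2 x hx).differentiableWithinAt, by simp, ?_⟩
  exact contDiffOn_zero.2 (hF''.congr fun x hx => (h2 x hx).derivWithin (hu x hx))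

lemma integral_exp_mul_le {Λ : ℝ} (hΛ : 0 < Λ) (x : ℝ) :
    ∫ t in (0:ℝ)..x, Real.exp (Λ * t) ≤ Real.exp (Λ * x) / Λ := by
  rw [intervalIntegral.integral_comp_mul_left (fun t => Real.exp t) hΛ.ne', integral_exp,
    mul_zero, Real.exp_zero, smul_eq_mul, div_eq_inv_mul]
  gcongr
  linarith

lemma exists_pos_of_tendsto_div_self {f : ℝ → ℝ} {c : ℝ} (hc : 0 < c)
    (h : Tendsto (fun r => f r / r) (𝓝[>] 0) (𝓝 c)) : ∃ δ > 0, ∀ r ∈ Ioo 0 δ, 0 < f r := by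
  obtain ⟨δ, hδ, hsub⟩ := mem_nhdsGT_iff_exists_Ioo_subset.1
    ((h.eventually (lt_mem_nhds hc)).and self_mem_nhdsWithin)
  exact ⟨δ, hδ, fun r hr => (div_pos_iff_of_pos_right (hsub hr).2).1 (hsub hr).1⟩

end HalfLine

section IntegratingFactor

variable {A γ : ℝ → ℝ}

noncomputable def integratingFactor (A γ : ℝ → ℝ) (r : ℝ) : ℝ :=
  r ^ 2 * Real.exp (∫ t in (1:ℝ)..r, (A t / t - γ t))

lemma integratingFactor_pos {r : ℝ} (hr : r ≠ 0) : 0 < integratingFactor A γ r := by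
  unfold integratingFactor; positivity

lemma integratingFactor_nonneg (r : ℝ) : 0 ≤ integratingFactor A γ r := by
  unfold integratingFactor; positivity

lemma continuousOn_div_sub (hA : ContinuousOn A (Ici 0)) (hγ : ContinuousOn γ (Ici 0)) :
    ContinuousOn (fun t => A t / t - γ t) (Ioi 0) :=
  ((hA.mono Ioi_subset_Ici_self).div continuousOn_id fun _ ht => ht.ne').sub
    (hγ.mono Ioi_subset_Ici_self)

lemma hasDerivAt_integratingFactor (hA : ContinuousOn A (Ici 0))
    (hγ : ContinuousOn γ (Ici 0)) {r : ℝ} (hr : 0 < r) :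
    HasDerivAt (integratingFactor A γ) ((2 / r + A r / r - γ r) * integratingFactor A γ r) r := by
  have hcont := continuousOn_div_sub hA hγ
  have hE : HasDerivAt (fun x => ∫ t in (1:ℝ)..x, (A t / t - γ t)) (A r / r - γ r) r :=
    intervalIntegral.integral_hasDerivAt_right
      (hcont.mono fun u hu => (lt_min one_pos hr).trans_le hu.1).intervalIntegrable
      (hcont.stronglyMeasurableAtFilter isOpen_Ioi r hr) (hcont.continuousAt (Ioi_mem_nhds hr))
  refine ((hasDerivAt_pow 2 r).mul hE.exp).congr_deriv ?_
  unfold integratingFactor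
  field_simp
  ring

/-- Since `A ≥ 0`, only `γ` can make the exponent of the integrating factor decrease. -/
lemma integral_div_sub_le (hA : ContinuousOn A (Ici 0)) (hγ : ContinuousOn γ (Ici 0))
    (hA0 : ∀ t, 0 < t → 0 ≤ A t) {t s : ℝ} (ht : 0 < t) (hts : t ≤ s) :
    ∫ u in (1:ℝ)..t, (A u / u - γ u)
      ≤ (∫ u in (1:ℝ)..s, (A u / u - γ u)) + ∫ u in t..s, |γ u| := by
  have hint {x y : ℝ} (hx : 0 < x) (hy : 0 < y) :
      IntervalIntegrable (fun u => A u / u - γ u) volume x y :=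
    ((continuousOn_div_sub hA hγ).mono fun u hu => (lt_min hx hy).trans_le hu.1).intervalIntegrable
  have hs : 0 < s := ht.trans_le hts
  have hsplit := intervalIntegral.integral_add_adjacent_intervals (hint one_pos ht) (hint ht hs)
  have hlow : ∫ u in t..s, -|γ u| ≤ ∫ u in t..s, (A u / u - γ u) := by
    refine intervalIntegral.integral_mono_on hts ?_ (hint ht hs) fun u hu => ?_
    · exact (intervalIntegrable_of_continuousOn_Ici hγ ht.le hs.le).abs.neg
    · have : 0 ≤ A u / u := div_nonneg (hA0 u (ht.trans_le hu.1)) (ht.trans_le hu.1).le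
      linarith [le_abs_self (γ u)]
  rw [intervalIntegral.integral_neg] at hlow
  linarith

lemma integratingFactor_le_mul_exp (hA : ContinuousOn A (Ici 0)) (hγ : ContinuousOn γ (Ici 0))
    (hA0 : ∀ t, 0 < t → 0 ≤ A t) {t s : ℝ} (ht : 0 < t) (hts : t ≤ s) :
    integratingFactor A γ t ≤ integratingFactor A γ s * Real.exp (∫ u in t..s, |γ u|) := by
  unfold integratingFactor
  rw [mul_assoc, ← Real.exp_add]
  gcongr
  exact integral_div_sub_le hA hγ hA0 ht hts

lemma continuousOn_integratingFactor (hA : ContinuousOn A (Ici 0))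
    (hγ : ContinuousOn γ (Ici 0)) (hA0 : ∀ t, 0 < t → 0 ≤ A t) :
    ContinuousOn (integratingFactor A γ) (Ici 0) := by
  intro x hx
  rcases (mem_Ici.1 hx).eq_or_lt with rfl | hx
  · -- near `0` the exponent is bounded above, so the factor `r ^ 2` forces the limit `0`
    set M := Real.exp (∫ u in (0:ℝ)..1, |γ u|)
    have hbound : ∀ t ∈ Ioc (0:ℝ) 1, integratingFactor A γ t ≤ M * t ^ 2 := fun t ht => by
      unfold integratingFactor
      rw [mul_comm]
      gcongr
      refine Real.exp_le_exp.2 <| (integral_div_sub_le hA hγ hA0 ht.1 ht.2).trans ?_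
      rw [intervalIntegral.integral_same, zero_add]
      exact intervalIntegral.integral_mono_interval ht.1.le ht.2 le_rfl
        (Eventually.of_forall fun _ => abs_nonneg _)
        (intervalIntegrable_of_continuousOn_Ici hγ le_rfl zero_le_one).abs
    have hlim : Tendsto (fun t => M * t ^ 2) (𝓝[Ici 0] 0) (𝓝 0) := by
      have : Continuous fun t : ℝ => M * t ^ 2 := by fun_prop
      simpa using (this.tendsto 0).mono_left nhdsWithin_le_nhds
    have hQ0 : integratingFactor A γ 0 = 0 := by simp [integratingFactor]
    rw [ContinuousWithinAt, hQ0]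
    refine tendsto_of_tendsto_of_tendsto_of_le_of_le' tendsto_const_nhds hlim
      (Eventually.of_forall integratingFactor_nonneg) ?_
    filter_upwards [self_mem_nhdsWithin, mem_nhdsWithin_of_mem_nhds (Iic_mem_nhds one_pos)]
      with t ht₀ ht₁
    rcases (mem_Ici.1 ht₀).eq_or_lt with rfl | ht
    · simp [hQ0]
    · exact hbound t ⟨ht, ht₁⟩
  · exact (hasDerivAt_integratingFactor hA hγ hx).continuousAt.continuousWithinAt

end IntegratingFactor

section RadialEquation

structure AdmissibleCoeffs (A γ K : ℝ → ℝ) : Prop where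
  continuousOn_A : ContinuousOn A (Ici 0)
  continuousOn_γ : ContinuousOn γ (Ici 0)
  continuousOn_K : ContinuousOn K (Ici 0)
  nonneg_A : ∀ t, 0 < t → 0 ≤ A t

variable {A γ K : ℝ → ℝ}

/-- With `Q = integratingFactor A γ`, integrating `(Q v')' = Q K v` from `0`, where `Q` vanishes,
gives `v' = flux A γ K v`; with `v 0 = 1` this is `v = volterraOp A γ K v`. -/
noncomputable def flux (A γ K v : ℝ → ℝ) (s : ℝ) : ℝ :=
  (integratingFactor A γ s)⁻¹ * ∫ t in (0:ℝ)..s, integratingFactor A γ t * K t * v t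

noncomputable def volterraOp (A γ K v : ℝ → ℝ) (x : ℝ) : ℝ :=
  1 + ∫ s in (0:ℝ)..x, flux A γ K v s

lemma flux_zero (v : ℝ → ℝ) : flux A γ K v 0 = 0 := by
  simp [flux]

lemma flux_congr {v₁ v₂ : ℝ → ℝ} {s : ℝ} (hs : 0 ≤ s) (h : EqOn v₁ v₂ (Icc 0 s)) :
    flux A γ K v₁ s = flux A γ K v₂ s := by
  unfold flux
  congr 1
  refine intervalIntegral.integral_congr fun t ht => ?_
  rw [uIcc_of_le hs] at ht
  simp only [h ht]

lemma isCausal_volterraOp : IsCausal (volterraOp A γ K) := by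
  intro v₁ v₂ x hx h
  unfold volterraOp
  congr 1
  refine intervalIntegral.integral_congr fun s hs => ?_
  rw [uIcc_of_le hx] at hs
  exact flux_congr hs.1 (h.mono (Icc_subset_Icc_right hs.2))

lemma AdmissibleCoeffs.continuousOn_integratingFactor_mul (h : AdmissibleCoeffs A γ K)
    {v : ℝ → ℝ} (hv : ContinuousOn v (Ici 0)) :
    ContinuousOn (fun t => integratingFactor A γ t * K t * v t) (Ici 0) :=
  ((continuousOn_integratingFactor h.continuousOn_A h.continuousOn_γ h.nonneg_A).mul
    h.continuousOn_K).mul hv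

lemma flux_sub (h : AdmissibleCoeffs A γ K) {v₁ v₂ : ℝ → ℝ} (hv₁ : ContinuousOn v₁ (Ici 0))
    (hv₂ : ContinuousOn v₂ (Ici 0)) {s : ℝ} (hs : 0 ≤ s) :
    flux A γ K (v₁ - v₂) s = flux A γ K v₁ s - flux A γ K v₂ s := by
  unfold flux
  rw [← mul_sub, ← intervalIntegral.integral_sub
    (intervalIntegrable_of_continuousOn_Ici (h.continuousOn_integratingFactor_mul hv₁) le_rfl hs)
    (intervalIntegrable_of_continuousOn_Ici (h.continuousOn_integratingFactor_mul hv₂) le_rfl hs)]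
  simp only [Pi.sub_apply, mul_sub]

lemma hasDerivAt_flux (h : AdmissibleCoeffs A γ K) {v : ℝ → ℝ} (hv : ContinuousOn v (Ici 0))
    {r : ℝ} (hr : 0 < r) :
    HasDerivAt (flux A γ K v) (K r * v r - (2 / r + A r / r - γ r) * flux A γ K v r) r := by
  have hQ := integratingFactor_pos (A := A) (γ := γ) hr.ne'
  refine (((hasDerivAt_integratingFactor h.continuousOn_A h.continuousOn_γ hr).inv hQ.ne').mul
    (hasDerivAt_primitive_of_continuousOn_Ici
      (h.continuousOn_integratingFactor_mul hv) hr)).congr_deriv ?_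
  simp only [flux, Pi.inv_apply]
  field_simp
  ring

lemma exists_abs_flux_le (h : AdmissibleCoeffs A γ K) {T : ℝ} (hT : 0 ≤ T) :
    ∃ C, 0 ≤ C ∧ ∀ v ψ : ℝ → ℝ, ∀ s ∈ Icc 0 T, (∀ t ∈ Ioc 0 s, |v t| ≤ ψ t) →
      IntervalIntegrable ψ volume 0 s → |flux A γ K v s| ≤ C * ∫ t in (0:ℝ)..s, ψ t := by
  obtain ⟨Kb, hKb⟩ := isCompact_Icc.exists_bound_of_continuousOn
    (h.continuousOn_K.mono Icc_subset_Ici_self : ContinuousOn K (Icc 0 T))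
  set E := Real.exp (∫ u in (0:ℝ)..T, |γ u|)
  have hKb0 : 0 ≤ Kb := (norm_nonneg _).trans (hKb 0 ⟨le_rfl, hT⟩)
  refine ⟨E * Kb, by positivity, fun v ψ s hs hvψ hψ => ?_⟩
  rcases hs.1.eq_or_lt with rfl | hs0
  · simp [flux_zero]
  have hQs := integratingFactor_pos (A := A) (γ := γ) hs0.ne'
  have hpt : ∀ t ∈ Ioc 0 s, ‖integratingFactor A γ t * K t * v t‖
      ≤ integratingFactor A γ s * (E * Kb) * ψ t := fun t ht => by
    have hQt : integratingFactor A γ t ≤ integratingFactor A γ s * E := by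
      refine (integratingFactor_le_mul_exp h.continuousOn_A h.continuousOn_γ h.nonneg_A
        ht.1 ht.2).trans ?_
      gcongr
      exact Real.exp_le_exp.2 <| intervalIntegral.integral_mono_interval ht.1.le ht.2 hs.2
        (Eventually.of_forall fun _ => abs_nonneg _)
        (intervalIntegrable_of_continuousOn_Ici h.continuousOn_γ le_rfl hT).abs
    have hK : |K t| ≤ Kb := hKb t ⟨ht.1.le, ht.2.trans hs.2⟩
    rw [Real.norm_eq_abs, abs_mul, abs_mul, abs_of_nonneg (integratingFactor_nonneg t)]
    calc integratingFactor A γ t * |K t| * |v t|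
        ≤ integratingFactor A γ s * E * Kb * ψ t := by
          gcongr
          exact hvψ t ht
      _ = _ := by ring
  have hint := intervalIntegral.norm_integral_le_of_norm_le hs0.le
    (Eventually.of_forall hpt) (hψ.const_mul _)
  rw [intervalIntegral.integral_const_mul, Real.norm_eq_abs] at hint
  unfold flux
  rw [abs_mul, abs_inv, abs_of_pos hQs]
  calc (integratingFactor A γ s)⁻¹ * |∫ t in (0:ℝ)..s, integratingFactor A γ t * K t * v t|
      ≤ (integratingFactor A γ s)⁻¹ *
          (integratingFactor A γ s * (E * Kb) * ∫ t in (0:ℝ)..s, ψ t) := by gcongr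
    _ = E * Kb * ∫ t in (0:ℝ)..s, ψ t := by field_simp

lemma continuousOn_flux (h : AdmissibleCoeffs A γ K) {v : ℝ → ℝ}
    (hv : ContinuousOn v (Ici 0)) : ContinuousOn (flux A γ K v) (Ici 0) := by
  intro x hx
  rcases (mem_Ici.1 hx).eq_or_lt with rfl | hx
  · obtain ⟨C, -, hC⟩ := exists_abs_flux_le h zero_le_one
    obtain ⟨M, hM⟩ := isCompact_Icc.exists_bound_of_continuousOn
      (hv.mono Icc_subset_Ici_self : ContinuousOn v (Icc 0 1))
    have hlin : ∀ t ∈ Icc (0:ℝ) 1, ‖flux A γ K v t‖ ≤ C * M * t := fun t ht => by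
      have := hC v (fun _ => M) t ht (fun u hu => hM u ⟨hu.1.le, hu.2.trans ht.2⟩)
        intervalIntegrable_const
      rwa [intervalIntegral.integral_const, smul_eq_mul, sub_zero, mul_comm t,
        ← mul_assoc] at this
    have hlim : Tendsto (fun t => C * M * t) (𝓝[Ici 0] 0) (𝓝 0) := by
      have : Continuous fun t : ℝ => C * M * t := by fun_prop
      simpa using (this.tendsto 0).mono_left nhdsWithin_le_nhds
    rw [ContinuousWithinAt, flux_zero]
    refine squeeze_zero_norm' ?_ hlim
    filter_upwards [self_mem_nhdsWithin, mem_nhdsWithin_of_mem_nhds (Iic_mem_nhds one_pos)]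
      with t ht₀ ht₁ using hlin t ⟨ht₀, ht₁⟩
  · exact (hasDerivAt_flux h hv hx).continuousAt.continuousWithinAt

lemma continuousOn_volterraOp (h : AdmissibleCoeffs A γ K) {v : ℝ → ℝ}
    (hv : ContinuousOn v (Ici 0)) : ContinuousOn (volterraOp A γ K v) (Ici 0) :=
  continuousOn_const.add (continuousOn_primitive_Ici (continuousOn_flux h hv))

lemma volterraOp_sub (h : AdmissibleCoeffs A γ K) {v₁ v₂ : ℝ → ℝ}
    (hv₁ : ContinuousOn v₁ (Ici 0)) (hv₂ : ContinuousOn v₂ (Ici 0)) {x : ℝ} (hx : 0 ≤ x) :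
    volterraOp A γ K v₁ x - volterraOp A γ K v₂ x = ∫ s in (0:ℝ)..x, flux A γ K (v₁ - v₂) s := by
  unfold volterraOp
  rw [add_sub_add_left_eq_sub, ← intervalIntegral.integral_sub
    (intervalIntegrable_of_continuousOn_Ici (continuousOn_flux h hv₁) le_rfl hx)
    (intervalIntegrable_of_continuousOn_Ici (continuousOn_flux h hv₂) le_rfl hx)]
  refine intervalIntegral.integral_congr fun s hs => ?_
  rw [uIcc_of_le hx] at hs
  exact (flux_sub h hv₁ hv₂ hs.1).symm

lemma exists_halvesBieleckiDist_volterraOp (h : AdmissibleCoeffs A γ K) {T : ℝ} (hT : 0 ≤ T) :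
    ∃ Λ, HalvesBieleckiDist (volterraOp A γ K) T Λ := by
  obtain ⟨C, hC0, hC⟩ := exists_abs_flux_le h hT
  refine ⟨2 * C + 1, fun v₁ v₂ hv₁ hv₂ D hD x hx => ?_⟩
  set Λ := 2 * C + 1
  have hΛ : 0 < Λ := by positivity
  have hD0 : 0 ≤ D := by simpa using (abs_nonneg _).trans (hD 0 ⟨le_rfl, hT⟩)
  have hflux : ∀ s ∈ Ioc 0 x, ‖flux A γ K (v₁ - v₂) s‖ ≤ C * D / Λ * Real.exp (Λ * s) :=
    fun s hs => by
      have := hC (v₁ - v₂) (fun t => D * Real.exp (Λ * t)) s ⟨hs.1.le, hs.2.trans hx.2⟩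
        (fun t ht => hD t ⟨ht.1.le, ht.2.trans (hs.2.trans hx.2)⟩)
        ((by fun_prop : Continuous fun t => D * Real.exp (Λ * t)).intervalIntegrable _ _)
      rw [intervalIntegral.integral_const_mul] at this
      calc ‖flux A γ K (v₁ - v₂) s‖ ≤ C * (D * ∫ t in (0:ℝ)..s, Real.exp (Λ * t)) := this
        _ ≤ C * (D * (Real.exp (Λ * s) / Λ)) := by gcongr; exact integral_exp_mul_le hΛ s
        _ = C * D / Λ * Real.exp (Λ * s) := by ring
  have hint := intervalIntegral.norm_integral_le_of_norm_le hx.1 (Eventually.of_forall hflux)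
    ((by fun_prop : Continuous fun s => C * D / Λ * Real.exp (Λ * s)).intervalIntegrable
      (μ := volume) _ _)
  rw [intervalIntegral.integral_const_mul, Real.norm_eq_abs,
    ← volterraOp_sub h hv₁.continuousOn hv₂.continuousOn hx.1] at hint
  have hΛsq : C / Λ ^ 2 ≤ 1 / 2 := by
    rw [div_le_iff₀ (by positivity)]
    nlinarith
  calc |volterraOp A γ K v₁ x - volterraOp A γ K v₂ x|
      ≤ C * D / Λ * (Real.exp (Λ * x) / Λ) := by
        refine hint.trans ?_
        gcongr
        exact integral_exp_mul_le hΛ x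
    _ = C / Λ ^ 2 * (D * Real.exp (Λ * x)) := by field_simp
    _ ≤ 1 / 2 * (D * Real.exp (Λ * x)) := by gcongr
    _ = D / 2 * Real.exp (Λ * x) := by ring

lemma exists_eq_volterraOp (h : AdmissibleCoeffs A γ K) :
    ∃ v, ContinuousOn v (Ici 0) ∧ ∀ x, 0 ≤ x → v x = volterraOp A γ K v x :=
  exists_fixedPoint_on_Ici isCausal_volterraOp
    (fun _ hv => continuousOn_volterraOp h hv.continuousOn)
    (fun _ hT => exists_halvesBieleckiDist_volterraOp h hT.le)

lemma hasDerivAt_of_eq_volterraOp (h : AdmissibleCoeffs A γ K) {v : ℝ → ℝ}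
    (hv : ContinuousOn v (Ici 0)) (hfix : ∀ x, 0 ≤ x → v x = volterraOp A γ K v x)
    {r : ℝ} (hr : 0 < r) : HasDerivAt v (flux A γ K v r) r := by
  refine ((hasDerivAt_primitive_of_continuousOn_Ici
    (continuousOn_flux h hv) hr).const_add 1).congr_of_eventuallyEq ?_
  filter_upwards [Ioi_mem_nhds hr] with x hx using hfix x hx.le

theorem exists_radial_solution (h : AdmissibleCoeffs A γ K) (hγK : ∀ r, 0 < r → γ r = r * K r) :
    ∃ ζ : ℝ → ℝ, ContDiffOn ℝ 2 ζ (Ici 0) ∧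
      (∀ r, 0 < r → deriv (deriv ζ) r + (A r / r - γ r) * deriv ζ r - A r / r ^ 2 * ζ r = 0) ∧
      ζ 0 = 0 ∧ derivWithin ζ (Ici 0) 0 = 1 ∧ Tendsto (fun r => ζ r / r) (𝓝[>] 0) (𝓝 1) := by
  obtain ⟨v, hv, hfix⟩ := exists_eq_volterraOp h
  have hv0 : v 0 = 1 := by simpa [volterraOp] using hfix 0 le_rfl
  set F := flux A γ K v
  have hF : ContinuousOn F (Ici 0) := continuousOn_flux h hv
  have hvD (r : ℝ) (hr : 0 < r) : HasDerivAt v (F r) r := hasDerivAt_of_eq_volterraOp h hv hfix hr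
  set ζ := fun r => r * v r
  set W := fun r => v r + r * F r
  set Z := fun r => r * K r * v r - (A r - r * γ r) * F r
  have hζD (r : ℝ) (hr : 0 < r) : HasDerivAt ζ (W r) r :=
    ((hasDerivAt_id r).mul (hvD r hr)).congr_deriv (by simp [W])
  have hWD (r : ℝ) (hr : 0 < r) : HasDerivAt W (Z r) r := by
    refine ((hvD r hr).add ((hasDerivAt_id r).mul (hasDerivAt_flux h hv hr))).congr_deriv ?_
    simp only [Z, id]
    field_simp
    ring
  have hζc : ContinuousOn ζ (Ici 0) := continuousOn_id.mul hv
  have hWc : ContinuousOn W (Ici 0) := hv.add (continuousOn_id.mul hF)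
  have hZc : ContinuousOn Z (Ici 0) :=
    ((continuousOn_id.mul h.continuousOn_K).mul hv).sub
      ((h.continuousOn_A.sub (continuousOn_id.mul h.continuousOn_γ)).mul hF)
  refine ⟨ζ, contDiffOn_two_Ici_of_hasDerivAt_Ioi hζc hWc hZc hζD hWD, fun r hr => ?_,
    by simp [ζ], ?_, ?_⟩
  · have hζ'' : deriv (deriv ζ) r = Z r := by
      have : deriv ζ =ᶠ[𝓝 r] W := by
        filter_upwards [Ioi_mem_nhds hr] with x hx using (hζD x hx).deriv
      rw [this.deriv_eq, (hWD r hr).deriv]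
    rw [hζ'', (hζD r hr).deriv]
    simp only [ζ, W, Z]
    rw [hγK r hr]
    field_simp
    ring
  · rw [(hasDerivWithinAt_Ici_of_hasDerivAt_Ioi hζc hWc hζD le_rfl).derivWithin
      (uniqueDiffOn_Ici 0 0 self_mem_Ici)]
    simp [W, hv0]
  · rw [← hv0]
    refine ((hv 0 self_mem_Ici).tendsto.mono_left (nhdsWithin_mono _ Ioi_subset_Ici_self)).congr' ?_
    filter_upwards [self_mem_nhdsWithin] with r hr
    exact (mul_div_cancel_left₀ (v r) (mem_Ioi.1 hr).ne').symm

end RadialEquation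

theorem stmt4_general (d : ℕ) (hd : 1 ≤ d) (β ε : ℝ) (hε : 0 < ε)
    (b σ η : ℝ → ℝ)
    (hbc : ContinuousOn b (Ici 0))
    (hσc : ContinuousOn σ (Ici 0)) (hηc : ContinuousOn η (Ici 0))
    (hσε : ∀ r ∈ Ici (0:ℝ), ε ≤ σ r)
    (g : ℝ → ℝ)
    (hg : ∀ r, g r = 2 * r * b r / (σ r) ^ 2) :
    ∃ ζ₂ : ℝ → ℝ, ContDiffOn ℝ 2 ζ₂ (Ici 0) ∧
      (∀ r > (0:ℝ), deriv (deriv ζ₂) r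
          + (((d : ℝ) - 1) / (r * (1 + η r ^ 2)) - β * g r) * deriv ζ₂ r
          - ((d : ℝ) - 1) / (r ^ 2 * (1 + η r ^ 2)) * ζ₂ r = 0) ∧
      ζ₂ 0 = 0 ∧
      derivWithin ζ₂ (Ici 0) 0 = 1 ∧
      Tendsto (fun r => ζ₂ r / r) (nhdsWithin 0 (Ioi 0)) (nhds 1) ∧
      ∃ δ > (0:ℝ), ∀ r ∈ Ioo (0:ℝ) δ, 0 < ζ₂ r := by
  have hσ2 : ∀ r ∈ Ici (0:ℝ), σ r ^ 2 ≠ 0 := fun r hr =>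
    pow_ne_zero 2 (hε.trans_le (hσε r hr)).ne'
  have hcoeffs : AdmissibleCoeffs (fun r => ((d : ℝ) - 1) / (1 + η r ^ 2)) (fun r => β * g r)
      (fun r => β * (2 * b r / σ r ^ 2)) := by
    refine ⟨continuousOn_const.div (continuousOn_const.add (hηc.pow 2)) fun r _ => by positivity,
      ?_, continuousOn_const.mul ((continuousOn_const.mul hbc).div (hσc.pow 2) hσ2),
      fun r _ => div_nonneg (sub_nonneg.2 (by exact_mod_cast hd)) (by positivity)⟩
    simp only [hg]
    exact continuousOn_const.mul
      (((continuousOn_const.mul continuousOn_id).mul hbc).div (hσc.pow 2) hσ2)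
  obtain ⟨ζ, hC2, hode, hζ0, hζ'0, hlim⟩ :=
    exists_radial_solution hcoeffs fun r _ => by rw [hg]; ring
  refine ⟨ζ, hC2, fun r hr => ?_, hζ0, hζ'0, hlim, exists_pos_of_tendsto_div_self one_pos hlim⟩
  rw [mul_comm r, mul_comm (r ^ 2), ← div_div, ← div_div]
  exact hode r hr

/-- Under hypotheses (H), the homogeneous equation (12) admits a C² solution ζ₂ on [0,∞)
with ζ₂(0)=0, ζ₂′(0)=1, ζ₂(r)/r → 1 as r → 0⁺, and ζ₂ > 0 near 0. -/
theorem stmt4 (d : ℕ) (hd : 1 ≤ d) (β ε : ℝ) (hβ : 0 < β) (hε : 0 < ε)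
    (f b σ η : ℝ → ℝ)
    (hfc : ContinuousOn f (Ici 0)) (hbc : ContinuousOn b (Ici 0))
    (hσc : ContinuousOn σ (Ici 0)) (hηc : ContinuousOn η (Ici 0))
    (hσε : ∀ r ∈ Ici (0:ℝ), ε ≤ σ r)
    (g G μ : ℝ → ℝ)
    (hg : ∀ r, g r = 2 * r * b r / (σ r) ^ 2)
    (hG : ∀ r, G r = ∫ ρ in (0:ℝ)..r, g ρ)
    (hμ : ∀ r, μ r = Real.exp (∫ s in (1:ℝ)..r, 1 / (s * (1 + η s ^ 2))))
    (H1 : ∃ r₀ ≥ (1:ℝ), ∀ r ≥ r₀, ε ≤ g r)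
    (H2 : ∃ ε' < β * ε / 2, Tendsto (fun r => Real.exp (-ε' * r) * f r) atTop (nhds 0)) :
    ∃ ζ₂ : ℝ → ℝ, ContDiffOn ℝ 2 ζ₂ (Ici 0) ∧
      (∀ r > (0:ℝ), deriv (deriv ζ₂) r
          + (((d : ℝ) - 1) / (r * (1 + η r ^ 2)) - β * g r) * deriv ζ₂ r
          - ((d : ℝ) - 1) / (r ^ 2 * (1 + η r ^ 2)) * ζ₂ r = 0) ∧
      ζ₂ 0 = 0 ∧
      derivWithin ζ₂ (Ici 0) 0 = 1 ∧
      Tendsto (fun r => ζ₂ r / r) (nhdsWithin 0 (Ioi 0)) (nhds 1) ∧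
      ∃ δ > (0:ℝ), ∀ r ∈ Ioo (0:ℝ) δ, 0 < ζ₂ r :=
  stmt4_general d hd β ε hε b σ η hbc hσc hηc hσε g hg
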